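/- Let θ be inner, g ∈ L^∞(T), and let φ, ψ be unimodular functions in L^∞(T) such that φK_θ ⊥ ψK_θ in L²(T); set M := φK_θ ⊕ ψK_θ and let A_g^M : M → M, f ↦ P_M(gf), where P_M is the orthogonal projection of L²(T) onto M. Then the map U : M → K_θ(D,C²), U(φf₁ + ψf₂) = (f₁,f₂)ᵀ, is unitary, and ker A_g^M = U*·ker A_G^θ, where A_G^θ is the operator on K_θ(D,C²) given by the matrix [[A_g^θ, A_{g·conj(φ)·ψ}^θ],[A_{g·conj(ψ)·φ}^θ, A_g^θ]]; in particular U(ker A_g^M) is a nearly S*-invariant subspace of H²(D,C²) with defect 2. -/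

import Mathlib

open MeasureTheory Complex Real
open scoped ENNReal ComplexConjugate

noncomputable section

namespace Paper

instance : Fact (0 < 2 * Real.pi) := ⟨by positivity⟩

abbrev Tc : Type := AddCircle (2 * Real.pi)
abbrev μ0 : MeasureTheory.Measure Tc := AddCircle.haarAddCircle
abbrev L2 : Type := MeasureTheory.Lp ℂ 2 μ0

def coeffCLM (n : ℤ) : L2 →L[ℂ] ℂ :=
  LinearMap.mkContinuous
    { toFun := fun f => fourierBasis.repr f n
      map_add' := fun f g => by simp
      map_smul' := fun c f => by simp }
    1
    (fun f => by
      have h := lp.norm_apply_le_norm (p := 2) (by norm_num) (fourierBasis.repr f) n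
      simpa using h)

def cf (f : L2) (n : ℤ) : ℂ := coeffCLM n f

/-- The subspace of `L²(𝕋)` of functions whose Fourier coefficients of index `< k` vanish.
Thus `coeffGE 0 = H²` and `coeffGE k = zᵏH²` for `k ≥ 0`. -/
def coeffGE (k : ℤ) : Submodule ℂ L2 :=
  ⨅ (n : ℤ) (_ : n < k), LinearMap.ker (coeffCLM n : L2 →ₗ[ℂ] ℂ)

/-- The subspace of `L²(𝕋)` of functions whose Fourier coefficients of index `≥ k` vanish.
Thus `coeffLT 0 = conj (H²₀) = (H²)^⊥`. -/
def coeffLT (k : ℤ) : Submodule ℂ L2 :=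
  ⨅ (n : ℤ) (_ : k ≤ n), LinearMap.ker (coeffCLM n : L2 →ₗ[ℂ] ℂ)

/-- The Hardy space `H²` of the unit disc, viewed as a subspace of `L²(𝕋)`. -/
def H2 : Submodule ℂ L2 := coeffGE 0

lemma mem_coeffGE {k : ℤ} {f : L2} : f ∈ coeffGE k ↔ ∀ n < k, cf f n = 0 := by
  simp [coeffGE, cf, Submodule.mem_iInf, LinearMap.mem_ker]

lemma isClosed_coeffGE (k : ℤ) : IsClosed ((coeffGE k : Submodule ℂ L2) : Set L2) := by
  have h : ((coeffGE k : Submodule ℂ L2) : Set L2)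
      = ⋂ (n : ℤ) (_ : n < k), (LinearMap.ker (coeffCLM n : L2 →ₗ[ℂ] ℂ) : Set L2) := by
    ext f
    simp [coeffGE, Submodule.mem_iInf, Set.mem_iInter]
  rw [h]
  exact isClosed_iInter fun n => isClosed_iInter fun _ => ContinuousLinearMap.isClosed_ker (coeffCLM n)

end Paper
namespace Paper

open scoped Classical in
/-- Multiplication by an `L^∞` function, as a linear map on `L²(𝕋)` (defined to be `0` if the
symbol is not essentially bounded). -/
def mulLM (g : Tc → ℂ) : L2 →ₗ[ℂ] L2 :=
  if hg : MemLp g ⊤ μ0 then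
    { toFun := fun f => ((Lp.memLp f).smul (r := 2) hg).toLp (g • ⇑f)
      map_add' := fun f₁ f₂ => by
        apply Lp.ext
        filter_upwards [MemLp.coeFn_toLp ((Lp.memLp (f₁ + f₂)).smul (r := 2) hg),
          MemLp.coeFn_toLp ((Lp.memLp f₁).smul (r := 2) hg),
          MemLp.coeFn_toLp ((Lp.memLp f₂).smul (r := 2) hg),
          Lp.coeFn_add f₁ f₂,
          Lp.coeFn_add (((Lp.memLp f₁).smul (r := 2) hg).toLp (g • ⇑f₁))
            (((Lp.memLp f₂).smul (r := 2) hg).toLp (g • ⇑f₂))] with x h0 h1 h2 h3 h4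
        rw [h0, h4, Pi.add_apply, h1, h2]
        simp only [Pi.smul_apply', Pi.add_apply, h3, smul_add]
      map_smul' := fun c f => by
        apply Lp.ext
        filter_upwards [MemLp.coeFn_toLp ((Lp.memLp (c • f)).smul (r := 2) hg),
          MemLp.coeFn_toLp ((Lp.memLp f).smul (r := 2) hg),
          Lp.coeFn_smul c f,
          Lp.coeFn_smul c (((Lp.memLp f).smul (r := 2) hg).toLp (g • ⇑f))] with x h0 h1 h3 h4
        simp only [RingHom.id_apply]
        rw [h0, h4, Pi.smul_apply, h1]
        simp only [Pi.smul_apply', Pi.smul_apply, h3]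
        exact smul_comm _ _ _ }
  else 0

end Paper
namespace Paper

/-- The orthogonal projection of `L²(𝕋)` onto a closed subspace, as a map `L² → L²`. -/
def projCLM (U : Submodule ℂ L2) (hU : IsClosed (U : Set L2)) : L2 →L[ℂ] L2 :=
  letI : CompleteSpace U := hU.completeSpace_coe
  U.subtypeL.comp U.orthogonalProjectionOnto

/-- The subspace `θH²` of `L²(𝕋)`. -/
def thetaH2 (θ : Tc → ℂ) : Submodule ℂ L2 := H2.map (mulLM θ)

/-- The model space `K_θ = H² ⊖ θH²`. -/
def Kmod (θ : Tc → ℂ) : Submodule ℂ L2 := H2 ⊓ (thetaH2 θ)ᗮ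

lemma isClosed_Kmod (θ : Tc → ℂ) : IsClosed ((Kmod θ : Submodule ℂ L2) : Set L2) :=
  (isClosed_coeffGE 0).inter (thetaH2 θ).isClosed_orthogonal

/-- The orthogonal projection `P_θ : L² → K_θ` (composed with the inclusion back into `L²`). -/
def Ptheta (θ : Tc → ℂ) : L2 →L[ℂ] L2 := projCLM (Kmod θ) (isClosed_Kmod θ)

/-- The orthogonal projection `P₊ : L² → H²`. -/
def Pplus : L2 →L[ℂ] L2 := projCLM H2 (isClosed_coeffGE 0)

/-- The independent variable `z = e^{it}`, as a function on the circle. -/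
def zf : Tc → ℂ := fun x => fourier 1 x

/-- The conjugate variable `z̄ = e^{-it}`. -/
def zbar : Tc → ℂ := fun x => fourier (-1) x

lemma memLp_fourier (n : ℤ) : MemLp (fun x : Tc => (fourier n x : ℂ)) ⊤ μ0 := by
  refine memLp_top_of_bound ((fourier n).continuous.aestronglyMeasurable) 1 ?_
  exact Filter.Eventually.of_forall fun x => le_of_eq (Circle.norm_coe _)

lemma memLp_zf : MemLp zf ⊤ μ0 := memLp_fourier 1

lemma memLp_zbar : MemLp zbar ⊤ μ0 := memLp_fourier (-1)

/-- The backward shift `S* : f ↦ (f - f(0))/z`, realised on `L²(𝕋)` as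
`f ↦ P₊(z̄ f)`; on `H²` this is the usual backward shift. -/
def Sstar : L2 →ₗ[ℂ] L2 := (Pplus : L2 →ₗ[ℂ] L2).comp (mulLM zbar)

/-- `θ` is an inner function: it is essentially bounded, unimodular a.e. on the circle, and
all its negative Fourier coefficients vanish (i.e. it is the boundary function of a bounded
analytic function on the disc). -/
structure IsInner (θ : Tc → ℂ) : Prop where
  memLinf : MemLp θ ⊤ μ0
  unimodular : ∀ᵐ x ∂μ0, ‖θ x‖ = 1
  analytic : ∀ n : ℤ, n < 0 → fourierCoeff θ n = 0

/-- Pointwise complex conjugation of a function on the circle. -/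
def conjFun (f : Tc → ℂ) : Tc → ℂ := fun x => (starRingEnd ℂ) (f x)

lemma memLp_conj {f : Tc → ℂ} {p : ℝ≥0∞} (hf : MemLp f p μ0) : MemLp (conjFun f) p μ0 := by
  refine ⟨continuous_star.comp_aestronglyMeasurable hf.1, ?_⟩
  have h : eLpNorm (conjFun f) p μ0 = eLpNorm f p μ0 :=
    eLpNorm_congr_norm_ae (Filter.Eventually.of_forall fun x => by
      simp [conjFun])
  rw [h]
  exact hf.2

/-- Complex conjugation on `L²(𝕋)`. -/
def conjL2 (f : L2) : L2 := (memLp_conj (Lp.memLp f)).toLp (conjFun ⇑f)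

end Paper
namespace Paper

/-- The set `w·U = {h ∈ L² : h = w·k (a.e.) for some k ∈ U}`, for a fixed function `w` on the
circle and a subspace `U ⊆ L²`; this is a (not necessarily closed) subspace of `L²`. -/
def mulSet (w : Tc → ℂ) (U : Submodule ℂ L2) : Submodule ℂ L2 where
  carrier := {h : L2 | ∃ k ∈ U, (⇑h : Tc → ℂ) =ᵐ[μ0] fun x => w x * (⇑k : Tc → ℂ) x}
  add_mem' := by
    rintro a b ⟨k₁, hk₁, ha⟩ ⟨k₂, hk₂, hb⟩
    refine ⟨k₁ + k₂, U.add_mem hk₁ hk₂, ?_⟩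
    filter_upwards [ha, hb, Lp.coeFn_add a b, Lp.coeFn_add k₁ k₂] with x h1 h2 h3 h4
    simp only [h3, Pi.add_apply, h1, h2, h4, mul_add]
  zero_mem' := by
    refine ⟨0, U.zero_mem, ?_⟩
    filter_upwards [Lp.coeFn_zero ℂ 2 μ0] with x h1
    simp [h1]
  smul_mem' := by
    rintro c a ⟨k, hk, ha⟩
    refine ⟨c • k, U.smul_mem c hk, ?_⟩
    filter_upwards [ha, Lp.coeFn_smul c a, Lp.coeFn_smul c k] with x h1 h2 h3
    simp only [h2, Pi.smul_apply, h1, h3, smul_eq_mul]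
    ring

/-- `f` is an outer function: `f ∈ H²` and the polynomial multiples of `f` are dense in `H²`
(i.e. `f` is cyclic for the forward shift). -/
def IsOuter (f : L2) : Prop :=
  f ∈ H2 ∧
    (Submodule.span ℂ (Set.range fun k : ℕ => ((mulLM zf) ^ k) f)).topologicalClosure = H2

/-- `h` is a cyclic vector for the backward shift `S*` on `H²`. -/
def CyclicSstar (h : L2) : Prop :=
  (Submodule.span ℂ (Set.range fun k : ℕ => (Sstar ^ k) h)).topologicalClosure = H2

/-- `d` divides `u` in the sense of inner functions. -/
def InnerDvd (d u : Tc → ℂ) : Prop :=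
  ∃ v : Tc → ℂ, IsInner v ∧ ∀ᵐ x ∂μ0, u x = d x * v x

/-- Two inner functions have greatest common inner divisor `1`, i.e. every common inner
divisor is a (necessarily unimodular) constant. -/
def CoprimeInner (u₁ u₂ : Tc → ℂ) : Prop :=
  ∀ d : Tc → ℂ, IsInner d → InnerDvd d u₁ → InnerDvd d u₂ → ∃ c : ℂ, ∀ᵐ x ∂μ0, d x = c

/-- The kernel of the truncated Toeplitz operator `A_g^θ = P_θ (g ·) : K_θ → K_θ`:
`f ∈ ker A_g^θ` iff `f ∈ K_θ` and `g f ⊥ K_θ`. -/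
def kerA (θ g : Tc → ℂ) : Submodule ℂ L2 :=
  Kmod θ ⊓ ((Kmod θ)ᗮ).comap (mulLM g)

/-- The kernel of the dual truncated Toeplitz operator `D_g^θ = Q (g ·) : K_θ^⊥ → K_θ^⊥`:
`f ∈ ker D_g^θ` iff `f ∈ K_θ^⊥` and `g f ⊥ K_θ^⊥`. -/
def kerD (θ g : Tc → ℂ) : Submodule ℂ L2 :=
  (Kmod θ)ᗮ ⊓ (((Kmod θ)ᗮ)ᗮ).comap (mulLM g)

/-- The space `A = {f ∈ ker D_g^θ : gf ∈ K_θ ∩ zH²}`. -/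
def dualA (θ g : Tc → ℂ) : Submodule ℂ L2 :=
  kerD θ g ⊓ (Kmod θ ⊓ coeffGE 1).comap (mulLM g)

/-- The space `C = ker D_g^θ ∩ (conj H²₀ ⊕ θzH²) ∩ A`. -/
def dualC (θ g : Tc → ℂ) : Submodule ℂ L2 :=
  kerD θ g ⊓ (coeffLT 0 ⊔ (coeffGE 1).map (mulLM θ)) ⊓ dualA θ g

end Paper
namespace Paper

/-- The vector-valued space `L²(𝕋, ℂⁿ)`, realised as an `ℓ²`-direct sum of `n` copies of
`L²(𝕋)`; the subspace `H2v n` below is the vector-valued Hardy space `H²(𝔻, ℂⁿ)`. -/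
abbrev Vec (n : ℕ) : Type := PiLp 2 (fun _ : Fin n => L2)

/-- The `i`-th component, as a linear map `L²(𝕋, ℂⁿ) → L²(𝕋)`. -/
def compLM {n : ℕ} (i : Fin n) : Vec n →ₗ[ℂ] L2 where
  toFun F := F i
  map_add' F G := rfl
  map_smul' c F := rfl

/-- Vector-valued analogue of `coeffGE`: `coeffGEv n 0 = H²(𝔻, ℂⁿ)` and
`coeffGEv n 1 = zH²(𝔻, ℂⁿ)`. -/
def coeffGEv (n : ℕ) (k : ℤ) : Submodule ℂ (Vec n) :=
  ⨅ i : Fin n, (coeffGE k).comap (compLM i)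

/-- The vector-valued Hardy space `H²(𝔻, ℂⁿ)`. -/
def H2v (n : ℕ) : Submodule ℂ (Vec n) := coeffGEv n 0

/-- The vector-valued model space `K_θ(𝔻, ℂⁿ)` (all components in `K_θ`). -/
def Kv (θ : Tc → ℂ) (n : ℕ) : Submodule ℂ (Vec n) :=
  ⨅ i : Fin n, (Kmod θ).comap (compLM i)

/-- Evaluation at the origin, `F ↦ F(0)`, for (Hardy-space) elements of `L²(𝕋, ℂⁿ)`. -/
def ev0 {n : ℕ} (F : Vec n) : EuclideanSpace ℂ (Fin n) := WithLp.toLp 2 (fun i => cf (F i) 0)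

/-- Evaluation at the origin as a linear map `H²(𝔻, ℂⁿ) → ℂⁿ`. -/
def ev0LM (n : ℕ) : Vec n →ₗ[ℂ] EuclideanSpace ℂ (Fin n) where
  toFun := ev0
  map_add' _F _G := by
    ext i
    simp [ev0, cf]
  map_smul' _c _F := by
    ext i
    simp [ev0, cf]

/-- The componentwise backward shift on `L²(𝕋, ℂⁿ)`. -/
def SstarV {n : ℕ} : Vec n →ₗ[ℂ] Vec n where
  toFun F := WithLp.toLp 2 (fun i => Sstar (F i))
  map_add' _F _G := by
    ext i
    simp
  map_smul' _c _F := by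
    ext i
    simp

/-- Componentwise multiplication by a scalar `L^∞` function on `L²(𝕋, ℂⁿ)`. -/
def mulVLM (g : Tc → ℂ) {n : ℕ} : Vec n →ₗ[ℂ] Vec n where
  toFun F := WithLp.toLp 2 (fun i => mulLM g (F i))
  map_add' _F _G := by
    ext i
    simp
  map_smul' _c _F := by
    ext i
    simp

/-- The projection onto the first `i` coordinates, `P_i : H²(𝔻, ℂⁿ) → H²(𝔻, ℂⁱ)`. -/
def projLE {n i : ℕ} (h : i ≤ n) : Vec n →ₗ[ℂ] Vec i where
  toFun F := WithLp.toLp 2 (fun j => F (Fin.castLE h j))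
  map_add' F G := rfl
  map_smul' c F := rfl

/-- The `i`-th row of a matrix symbol applied to a vector function:
`F ↦ ∑ j, G i j • F j`. -/
def rowLM {n : ℕ} (G : Matrix (Fin n) (Fin n) (Tc → ℂ)) (i : Fin n) : Vec n →ₗ[ℂ] L2 :=
  ∑ j : Fin n, (mulLM (G i j)).comp (compLM j)

/-- The kernel of the block Toeplitz operator `T_G = P₊(G ·)` on `H²(𝔻, ℂⁿ)`:
`F ∈ ker T_G` iff `F ∈ H²(𝔻, ℂⁿ)` and every component of `GF` is orthogonal to `H²`. -/
def kerT {n : ℕ} (G : Matrix (Fin n) (Fin n) (Tc → ℂ)) : Submodule ℂ (Vec n) :=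
  H2v n ⊓ ⨅ i : Fin n, (H2ᗮ).comap (rowLM G i)

/-- The kernel of the matrix truncated Toeplitz operator `A_G^θ = P_θ(G ·)` on `K_θ(𝔻, ℂ²)`. -/
def kerAv (θ : Tc → ℂ) (G : Matrix (Fin 2) (Fin 2) (Tc → ℂ)) : Submodule ℂ (Vec 2) :=
  Kv θ 2 ⊓ ⨅ i : Fin 2, ((Kmod θ)ᗮ).comap (rowLM G i)

/-- The scalar-type space `w·U ⊆ L²(𝕋, ℂⁿ)`, for a fixed vector function `w` and a
subspace `U ⊆ L²(𝕋)` of scalar functions. -/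
def vecMulSet {n : ℕ} (w : Vec n) (U : Submodule ℂ L2) : Submodule ℂ (Vec n) where
  carrier := {F | ∃ k ∈ U, ∀ i : Fin n,
    (⇑(F i) : Tc → ℂ) =ᵐ[μ0] fun x => (⇑(w i) : Tc → ℂ) x * (⇑k : Tc → ℂ) x}
  add_mem' := by
    rintro a b ⟨k₁, hk₁, ha⟩ ⟨k₂, hk₂, hb⟩
    refine ⟨k₁ + k₂, U.add_mem hk₁ hk₂, fun i => ?_⟩
    have hab : (a + b) i = a i + b i := rfl
    rw [hab]
    filter_upwards [ha i, hb i, Lp.coeFn_add (a i) (b i), Lp.coeFn_add k₁ k₂]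
      with x h1 h2 h3 h4
    simp only [h3, Pi.add_apply, h1, h2, h4, mul_add]
  zero_mem' := by
    refine ⟨0, U.zero_mem, fun i => ?_⟩
    have h0 : (0 : Vec n) i = 0 := rfl
    rw [h0]
    filter_upwards [Lp.coeFn_zero ℂ 2 μ0] with x h1
    simp [h1]
  smul_mem' := by
    rintro c a ⟨k, hk, ha⟩
    refine ⟨c • k, U.smul_mem c hk, fun i => ?_⟩
    have hc : (c • a) i = c • (a i) := rfl
    rw [hc]
    filter_upwards [ha i, Lp.coeFn_smul c (a i), Lp.coeFn_smul c k] with x h1 h2 h3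
    simp only [h2, Pi.smul_apply, h1, h3, smul_eq_mul]
    ring

end Paper
namespace Paper

/-- The representation `F = F₀ k₀ + z ∑ⱼ kⱼ eⱼ` of Theorem 3.4(1): here the columns of `F₀`
are `W 0, …, W (r-1)`, the `eⱼ` are an orthonormal basis of the defect space, and the
parameter `k = (k₀, k₁, …, k_m)` runs through a subspace of `H²(𝔻, ℂ^{r+m})`. -/
def rep1 {n r m : ℕ} (W : Fin r → Vec n) (e : Fin m → Vec n) (k : Vec (r + m)) (F : Vec n) :
    Prop :=
  ∀ i : Fin n,
    (⇑(F i) : Tc → ℂ) =ᵐ[μ0] fun x =>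
      (∑ j : Fin r, (⇑(k (Fin.castAdd m j)) : Tc → ℂ) x * (⇑(W j i) : Tc → ℂ) x) +
        zf x * ∑ j : Fin m, (⇑(k (Fin.natAdd r j)) : Tc → ℂ) x * (⇑(e j i) : Tc → ℂ) x

/-- The representation `F = z ∑ⱼ kⱼ eⱼ` of Theorem 3.4(2). -/
def rep2 {n m : ℕ} (e : Fin m → Vec n) (k : Vec m) (F : Vec n) : Prop :=
  ∀ i : Fin n,
    (⇑(F i) : Tc → ℂ) =ᵐ[μ0] fun x =>
      zf x * ∑ j : Fin m, (⇑(k j) : Tc → ℂ) x * (⇑(e j i) : Tc → ℂ) x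

end Paper
namespace Paper

/-- The multiband space `M = φK_θ ⊕ ψK_θ ⊆ L²(𝕋)`. -/
def multiband (θ φ ψ : Tc → ℂ) : Submodule ℂ L2 :=
  (Kmod θ).map (mulLM φ) ⊔ (Kmod θ).map (mulLM ψ)

/-- The kernel of the truncated Toeplitz operator `A_g^M = P_M(g ·) : M → M` on the
multiband space `M = φK_θ ⊕ ψK_θ`. -/
def kerAM (θ φ ψ g : Tc → ℂ) : Submodule ℂ L2 :=
  multiband θ φ ψ ⊓ ((multiband θ φ ψ)ᗮ).comap (mulLM g)

/-- The matrix symbol `[[g, g·conj φ·ψ], [g·conj ψ·φ, g]]` of Section 6. -/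
def Gmb (g φ ψ : Tc → ℂ) : Matrix (Fin 2) (Fin 2) (Tc → ℂ) :=
  !![g, fun x => g x * conjFun φ x * ψ x;
     fun x => g x * conjFun ψ x * φ x, g]


/-!
The adjoint of multiplication by `φ` is multiplication by `φ̄`, so `h ⊥ M` iff `φ̄ h ⊥ K_θ`
and `ψ̄ h ⊥ K_θ`. As `φ̄ φ = ψ̄ ψ = 1`, for `h = g (φ f₁ + ψ f₂)` these two conditions say
exactly that both rows of `G` send `(f₁, f₂)` into `K_θ^⊥`; unimodularity together with
`φK_θ ⊥ ψK_θ` also makes `U` isometric.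

For the near `S*`-invariance, if `F ∈ ker A_G^θ` vanishes at `0` then `S* F = z̄ F` stays in
`K_θ(𝔻, ℂⁿ)`. For `h ⊥ K_θ`, the functional `k ↦ ⟪z̄ h, k⟫ = ⟪h, z k⟫` on `K_θ` vanishes
wherever `k ↦ ⟪θ z̄, k⟫` does, since then `z k ∈ K_θ`; hence `P_θ (z̄ h)` is a multiple of
`P_θ (θ z̄)`. So `A_G^θ (S* F)` lies in an `n`-dimensional space, and the orthogonal complement
of `ker A_G^θ` inside the preimage of that space is a defect space of dimension at most `n`.
-/

open scoped InnerProductSpace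

section MultiplicationOperator

variable {a b : Tc → ℂ}

lemma mulLM_of_not_memLp (ha : ¬MemLp a ⊤ μ0) : mulLM a = 0 := by
  rw [mulLM, dif_neg ha]

lemma coeFn_mulLM (ha : MemLp a ⊤ μ0) (f : L2) :
    ⇑(mulLM a f) =ᵐ[μ0] fun x => a x * f x := by
  rw [mulLM, dif_pos ha]
  exact MemLp.coeFn_toLp ((Lp.memLp f).smul (r := 2) ha)

lemma mulLM_mulLM (ha : MemLp a ⊤ μ0) (hb : MemLp b ⊤ μ0) (f : L2) :
    mulLM a (mulLM b f) = mulLM (a * b) f := by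
  apply Lp.ext
  filter_upwards [coeFn_mulLM ha (mulLM b f), coeFn_mulLM hb f,
    coeFn_mulLM (hb.mul ha) f] with x h1 h2 h3
  rw [h1, h2, h3, Pi.mul_apply, mul_assoc]

lemma mulLM_comm (ha : MemLp a ⊤ μ0) (b : Tc → ℂ) (f : L2) :
    mulLM a (mulLM b f) = mulLM b (mulLM a f) := by
  by_cases hb : MemLp b ⊤ μ0
  · simp only [mulLM_mulLM ha hb, mulLM_mulLM hb ha, mul_comm]
  · simp [mulLM_of_not_memLp hb]

lemma conjFun_conjFun (a : Tc → ℂ) : conjFun (conjFun a) = a := by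
  funext x; simp [conjFun]

lemma inner_mulLM_left (ha : MemLp a ⊤ μ0) (f g : L2) :
    ⟪mulLM a f, g⟫_ℂ = ⟪f, mulLM (conjFun a) g⟫_ℂ := by
  simp only [L2.inner_def]
  refine integral_congr_ae ?_
  filter_upwards [coeFn_mulLM ha f, coeFn_mulLM (memLp_conj ha) g] with x h1 h2
  simp only [h1, h2, conjFun, RCLike.inner_apply, map_mul]
  ring

lemma inner_mulLM_right (ha : MemLp a ⊤ μ0) (f g : L2) :
    ⟪f, mulLM a g⟫_ℂ = ⟪mulLM (conjFun a) f, g⟫_ℂ := by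
  rw [inner_mulLM_left (memLp_conj ha), conjFun_conjFun]

lemma norm_mulLM (ha : MemLp a ⊤ μ0) (hau : ∀ᵐ x ∂μ0, ‖a x‖ = 1) (f : L2) :
    ‖mulLM a f‖ = ‖f‖ := by
  simp only [Lp.norm_def]
  congr 1
  refine eLpNorm_congr_norm_ae ?_
  filter_upwards [coeFn_mulLM ha f, hau] with x h1 h2
  rw [h1, norm_mul, h2, one_mul]

lemma continuous_mulLM (a : Tc → ℂ) : Continuous (mulLM a) := by
  by_cases ha : MemLp a ⊤ μ0
  · refine AddMonoidHomClass.continuous_of_bound (mulLM a) (eLpNorm a ⊤ μ0).toReal fun f => ?_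
    simp only [Lp.norm_def, ← ENNReal.toReal_mul]
    refine ENNReal.toReal_mono (ENNReal.mul_ne_top ha.eLpNorm_ne_top (Lp.eLpNorm_ne_top f)) ?_
    calc eLpNorm (mulLM a f) 2 μ0 = eLpNorm (a • (⇑f : Tc → ℂ)) 2 μ0 :=
          eLpNorm_congr_ae (coeFn_mulLM ha f)
      _ ≤ _ := eLpNorm_smul_le_eLpNorm_top_mul_eLpNorm 2 (Lp.aestronglyMeasurable f) a
  · rw [mulLM_of_not_memLp ha]
    exact continuous_zero

end MultiplicationOperator

section HardySpace

lemma cf_eq_inner (f : L2) (n : ℤ) : cf f n = ⟪fourierLp 2 n, f⟫_ℂ := by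
  rw [← coe_fourierBasis]
  exact fourierBasis.repr_apply_apply f n

lemma cf_eq_fourierCoeff (f : L2) (n : ℤ) : cf f n = fourierCoeff (⇑f) n :=
  fourierBasis_repr f n

lemma cf_fourierLp (m n : ℤ) : cf (fourierLp 2 m) n = if n = m then 1 else 0 := by
  rw [cf_eq_inner, ← coe_fourierBasis, orthonormal_iff_ite.mp fourierBasis.orthonormal]

lemma conjFun_zf : conjFun zf = zbar := by
  funext x
  rw [conjFun, zf, zbar, fourier_neg]

lemma conjFun_zbar : conjFun zbar = zf := by
  rw [← conjFun_zf, conjFun_conjFun]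

lemma cf_mulLM_fourier (k : ℤ) (f : L2) (n : ℤ) :
    cf (mulLM (fun x => fourier k x) f) n = cf f (n - k) := by
  rw [cf_eq_fourierCoeff, cf_eq_fourierCoeff, fourierCoeff, fourierCoeff]
  refine integral_congr_ae ?_
  filter_upwards [coeFn_mulLM (memLp_fourier k) f] with x hx
  rw [hx, smul_eq_mul, smul_eq_mul, ← mul_assoc, ← fourier_add]
  congr 3
  ring

lemma cf_mulLM_zf (f : L2) (n : ℤ) : cf (mulLM zf f) n = cf f (n - 1) :=
  cf_mulLM_fourier 1 f n

lemma cf_mulLM_zbar (f : L2) (n : ℤ) : cf (mulLM zbar f) n = cf f (n + 1) := by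
  rw [← sub_neg_eq_add]
  exact cf_mulLM_fourier (-1) f n

lemma mulLM_zf_mem_H2 {f : L2} (hf : f ∈ H2) : mulLM zf f ∈ H2 := by
  rw [H2, mem_coeffGE] at hf ⊢
  intro n hn
  rw [cf_mulLM_zf]
  exact hf _ (by omega)

lemma mulLM_zbar_mem_H2 {f : L2} (hf : f ∈ H2) (h0 : cf f 0 = 0) : mulLM zbar f ∈ H2 := by
  rw [H2, mem_coeffGE] at hf ⊢
  intro n hn
  rw [cf_mulLM_zbar]
  rcases (by omega : n + 1 < 0 ∨ n + 1 = 0) with h | h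
  · exact hf _ h
  · rwa [h]

lemma mulLM_zbar_sub_mem_H2 {f : L2} (hf : f ∈ H2) :
    mulLM zbar f - cf f 0 • fourierLp 2 (-1) ∈ H2 := by
  rw [H2, mem_coeffGE] at hf ⊢
  intro n hn
  rw [cf, map_sub, map_smul, ← cf, ← cf, cf_mulLM_zbar, cf_fourierLp, smul_eq_mul]
  rcases (by omega : n + 1 < 0 ∨ n = -1) with h | rfl
  · rw [hf _ h, if_neg (by omega), mul_zero, sub_zero]
  · simp

lemma Sstar_eq_mulLM_zbar {f : L2} (hf : f ∈ H2) (h0 : cf f 0 = 0) :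
    Sstar f = mulLM zbar f := by
  have : CompleteSpace H2 := (isClosed_coeffGE 0).completeSpace_coe
  exact Submodule.starProjection_eq_self_iff.2 (mulLM_zbar_mem_H2 hf h0)

end HardySpace

section ModelSpace

variable {θ : Tc → ℂ}

lemma mem_map_orthogonal_iff {U : Submodule ℂ L2} {T : L2 →ₗ[ℂ] L2} {f : L2} :
    f ∈ (U.map T)ᗮ ↔ ∀ u ∈ U, ⟪T u, f⟫_ℂ = 0 := by
  simp only [Submodule.mem_orthogonal, Submodule.mem_map, forall_exists_index, and_imp,
    forall_apply_eq_imp_iff₂]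

lemma mem_Kmod_iff {f : L2} : f ∈ Kmod θ ↔ f ∈ H2 ∧ ∀ u ∈ H2, ⟪mulLM θ u, f⟫_ℂ = 0 := by
  rw [Kmod, Submodule.mem_inf, thetaH2, mem_map_orthogonal_iff]

lemma Kmod_le_H2 : Kmod θ ≤ H2 := inf_le_left

lemma ker_Ptheta : (Ptheta θ).ker = (Kmod θ)ᗮ := by
  have : CompleteSpace (Kmod θ) := (isClosed_Kmod θ).completeSpace_coe
  exact (Kmod θ).ker_starProjection

lemma mulLM_zbar_mem_Kmod {f : L2} (hf : f ∈ Kmod θ) (h0 : cf f 0 = 0) :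
    mulLM zbar f ∈ Kmod θ := by
  rw [mem_Kmod_iff] at hf ⊢
  refine ⟨mulLM_zbar_mem_H2 hf.1 h0, fun u hu => ?_⟩
  rw [inner_mulLM_right memLp_zbar, conjFun_zbar, mulLM_comm memLp_zf]
  exact hf.2 _ (mulLM_zf_mem_H2 hu)

lemma mulLM_zf_mem_Kmod {k : L2} (hk : k ∈ Kmod θ)
    (hk₀ : ⟪mulLM θ (fourierLp 2 (-1)), k⟫_ℂ = 0) : mulLM zf k ∈ Kmod θ := by
  rw [mem_Kmod_iff] at hk ⊢
  refine ⟨mulLM_zf_mem_H2 hk.1, fun u hu => ?_⟩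
  -- `z̄ u = (z̄ u - u(0) z̄) + u(0) z̄`, and the first summand lies in `H²`
  rw [inner_mulLM_right memLp_zf, conjFun_zf, mulLM_comm memLp_zbar,
    ← sub_add_cancel (mulLM zbar u) (cf u 0 • fourierLp 2 (-1)), map_add, inner_add_left,
    hk.2 _ (mulLM_zbar_sub_mem_H2 hu), map_smul, inner_smul_left, hk₀, mul_zero, add_zero]

end ModelSpace

section Defect

lemma exists_sub_smul_mem_orthogonal {𝕜 E : Type*} [RCLike 𝕜] [NormedAddCommGroup E]
    [InnerProductSpace 𝕜 E] {K : Submodule 𝕜 E} {x y : E}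
    (h : ∀ k ∈ K, ⟪x, k⟫_𝕜 = 0 → ⟪y, k⟫_𝕜 = 0) : ∃ c : 𝕜, y - c • x ∈ Kᗮ := by
  by_cases hx : ∃ k₀ ∈ K, ⟪x, k₀⟫_𝕜 ≠ 0
  · obtain ⟨k₀, hk₀, hxk₀⟩ := hx
    refine ⟨conj (⟪y, k₀⟫_𝕜 / ⟪x, k₀⟫_𝕜), (Submodule.mem_orthogonal' _ _).2 fun k hk => ?_⟩
    have hy := h _ (K.sub_mem hk (K.smul_mem (⟪x, k⟫_𝕜 / ⟪x, k₀⟫_𝕜) hk₀))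
      (by rw [inner_sub_right, inner_smul_right, div_mul_cancel₀ _ hxk₀, sub_self])
    rw [inner_sub_right, inner_smul_right] at hy
    rw [inner_sub_left, inner_smul_left, RCLike.conj_conj]
    field_simp at hy ⊢
    linear_combination hy
  · push Not at hx
    exact ⟨0, by simpa [Submodule.mem_orthogonal'] using fun k hk => h k hk (hx k hk)⟩

lemma exists_finrank_le_of_eq_inf_ker {𝕜 V V' : Type*} [RCLike 𝕜] [NormedAddCommGroup V]
    [InnerProductSpace 𝕜 V] [AddCommGroup V'] [Module 𝕜 V'] {K L : Submodule 𝕜 V}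
    [K.HasOrthogonalProjection] {Φ : V →ₗ[𝕜] V'} (hK : K = L ⊓ LinearMap.ker Φ)
    (W : Submodule 𝕜 V') [FiniteDimensional 𝕜 W] :
    ∃ E : Submodule 𝕜 V, FiniteDimensional 𝕜 E ∧ Module.finrank 𝕜 E ≤ Module.finrank 𝕜 W ∧
      E ≤ Kᗮ ∧ L ⊓ W.comap Φ ≤ K ⊔ E := by
  set E := Kᗮ ⊓ (L ⊓ W.comap Φ)
  let Ψ : E →ₗ[𝕜] W := (Φ.domRestrict E).codRestrict W fun x => x.2.2.2
  have hΨ : Function.Injective Ψ := by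
    refine (injective_iff_map_eq_zero Ψ).2 ?_
    rintro ⟨x, hxK, hxL, _⟩ hΨx
    have hΦx : Φ x = 0 := congrArg Subtype.val hΨx
    have hxK' : x ∈ K := hK ▸ ⟨hxL, hΦx⟩
    exact Subtype.ext (inner_self_eq_zero.1 (Submodule.inner_right_of_mem_orthogonal hxK' hxK))
  have : FiniteDimensional 𝕜 E := Module.Finite.of_injective Ψ hΨ
  refine ⟨E, this, LinearMap.finrank_le_finrank_of_injective hΨ, inf_le_left, ?_⟩
  have hKN : K ≤ L ⊓ W.comap Φ := hK ▸ inf_le_inf_left L fun x hx => by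
    simp [LinearMap.mem_ker.1 hx]
  exact (Submodule.sup_orthogonal_inf_of_hasOrthogonalProjection hKN).ge

variable {θ : Tc → ℂ}

lemma exists_Ptheta_mulLM_zbar_eq_smul {h : L2} (hh : h ∈ (Kmod θ)ᗮ) :
    ∃ c : ℂ, Ptheta θ (mulLM zbar h) = c • Ptheta θ (mulLM θ (fourierLp 2 (-1))) := by
  obtain ⟨c, hc⟩ := exists_sub_smul_mem_orthogonal (K := Kmod θ) fun k hk hk₀ => by
    rw [inner_mulLM_left memLp_zbar, conjFun_zbar]
    exact (Submodule.mem_orthogonal' _ _).1 hh _ (mulLM_zf_mem_Kmod hk hk₀)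
  refine ⟨c, ?_⟩
  rw [← ker_Ptheta, LinearMap.mem_ker, map_sub, map_smul, sub_eq_zero] at hc
  exact hc

end Defect

section VectorValued

variable {n : ℕ} {θ : Tc → ℂ}

-- `kerAv` with any number of components: `kerAv θ G` is `kerAvec θ G` by definition.
def kerAvec (θ : Tc → ℂ) (G : Matrix (Fin n) (Fin n) (Tc → ℂ)) : Submodule ℂ (Vec n) :=
  Kv θ n ⊓ ⨅ i, ((Kmod θ)ᗮ).comap (rowLM G i)

/-- `finrank` of an infinite-dimensional space is `0`, hence the explicit `FiniteDimensional`. -/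
def IsNearlySstarInvariant (M : Submodule ℂ (Vec n)) (m : ℕ) : Prop :=
  ∃ E : Submodule ℂ (Vec n), FiniteDimensional ℂ E ∧ Module.finrank ℂ E ≤ m ∧ E ≤ Mᗮ ∧
    ∀ F ∈ M, ev0 F = 0 → SstarV F ∈ M ⊔ E

def Avec (θ : Tc → ℂ) (G : Matrix (Fin n) (Fin n) (Tc → ℂ)) : Vec n →ₗ[ℂ] Fin n → L2 :=
  LinearMap.pi fun i => (Ptheta θ : L2 →ₗ[ℂ] L2) ∘ₗ rowLM G i

lemma mem_Kv_iff {F : Vec n} : F ∈ Kv θ n ↔ ∀ i, F i ∈ Kmod θ := by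
  simp only [Kv, Submodule.mem_iInf, Submodule.mem_comap]
  rfl

lemma rowLM_apply (G : Matrix (Fin n) (Fin n) (Tc → ℂ)) (i : Fin n) (F : Vec n) :
    rowLM G i F = ∑ j, mulLM (G i j) (F j) := by
  simp only [rowLM, LinearMap.sum_apply, LinearMap.comp_apply]
  rfl

lemma mem_kerAvec_iff {G : Matrix (Fin n) (Fin n) (Tc → ℂ)} {F : Vec n} :
    F ∈ kerAvec θ G ↔ (∀ i, F i ∈ Kmod θ) ∧ ∀ i, rowLM G i F ∈ (Kmod θ)ᗮ := by
  simp [kerAvec, mem_Kv_iff, Submodule.mem_iInf]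

lemma kerAvec_eq_inf_ker (θ : Tc → ℂ) (G : Matrix (Fin n) (Fin n) (Tc → ℂ)) :
    kerAvec θ G = Kv θ n ⊓ LinearMap.ker (Avec θ G) := by
  ext F
  simp [mem_kerAvec_iff, mem_Kv_iff, Avec, funext_iff, ← ker_Ptheta]

lemma isClosed_kerAvec (θ : Tc → ℂ) (G : Matrix (Fin n) (Fin n) (Tc → ℂ)) :
    IsClosed (kerAvec θ G : Set (Vec n)) := by
  have hrow : ∀ i, Continuous (rowLM G i) := fun i => by
    simp only [funext (rowLM_apply G i)]
    exact continuous_finsetSum _ fun j _ =>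
      (continuous_mulLM _).comp (PiLp.continuous_apply 2 _ j)
  have : (kerAvec θ G : Set (Vec n)) = (⋂ i, (· i) ⁻¹' (Kmod θ : Set L2)) ∩
      ⋂ i, rowLM G i ⁻¹' ((Kmod θ)ᗮ : Set L2) := by
    ext F
    simp [mem_kerAvec_iff]
  rw [this]
  exact (isClosed_iInter fun i => (isClosed_Kmod θ).preimage (PiLp.continuous_apply 2 _ i)).inter
    (isClosed_iInter fun i => (Kmod θ).isClosed_orthogonal.preimage (hrow i))

lemma rowLM_mulVLM {a : Tc → ℂ} (ha : MemLp a ⊤ μ0) (G : Matrix (Fin n) (Fin n) (Tc → ℂ))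
    (i : Fin n) (F : Vec n) : rowLM G i (mulVLM a F) = mulLM a (rowLM G i F) := by
  simp only [rowLM_apply, map_sum, mulLM_comm ha]
  rfl

lemma SstarV_eq_mulVLM_zbar {F : Vec n} (hF : ∀ i, F i ∈ H2) (hF₀ : ev0 F = 0) :
    SstarV F = mulVLM zbar F := by
  refine PiLp.ext fun i => ?_
  exact Sstar_eq_mulLM_zbar (hF i) (congrArg (· i) hF₀)

theorem isNearlySstarInvariant_kerAvec (θ : Tc → ℂ) (G : Matrix (Fin n) (Fin n) (Tc → ℂ)) :
    IsNearlySstarInvariant (kerAvec θ G) n := by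
  set w := Ptheta θ (mulLM θ (fourierLp 2 (-1)))
  let W := LinearMap.range
    (LinearMap.pi fun i => (LinearMap.proj i).smulRight w : (Fin n → ℂ) →ₗ[ℂ] Fin n → L2)
  have : CompleteSpace (kerAvec θ G) := (isClosed_kerAvec θ G).completeSpace_coe
  obtain ⟨E, hEfin, hErank, hEorth, hE⟩ :=
    exists_finrank_le_of_eq_inf_ker (kerAvec_eq_inf_ker θ G) W
  have hWrank : Module.finrank ℂ W ≤ n :=
    (LinearMap.finrank_range_le _).trans (Module.finrank_fin_fun ℂ).le
  refine ⟨E, hEfin, hErank.trans hWrank, hEorth, fun F hF hF₀ => hE ?_⟩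
  obtain ⟨hFK, hFrow⟩ := mem_kerAvec_iff.1 hF
  rw [SstarV_eq_mulVLM_zbar (fun i => Kmod_le_H2 (hFK i)) hF₀]
  choose c hc using fun i => exists_Ptheta_mulLM_zbar_eq_smul (hFrow i)
  refine ⟨mem_Kv_iff.2 fun i => mulLM_zbar_mem_Kmod (hFK i) (congrArg (· i) hF₀),
    c, funext fun i => ?_⟩
  simp [Avec, rowLM_mulVLM memLp_zbar, hc, w]

end VectorValued

section Multiband

variable {θ g φ ψ : Tc → ℂ}

lemma mem_map_mulLM_orthogonal_iff {a : Tc → ℂ} (ha : MemLp a ⊤ μ0) {U : Submodule ℂ L2}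
    {f : L2} : f ∈ (U.map (mulLM a))ᗮ ↔ mulLM (conjFun a) f ∈ Uᗮ := by
  rw [mem_map_orthogonal_iff, Submodule.mem_orthogonal]
  simp only [inner_mulLM_left ha]

lemma mem_multiband_orthogonal_iff (hφ : MemLp φ ⊤ μ0) (hψ : MemLp ψ ⊤ μ0) {f : L2} :
    f ∈ (multiband θ φ ψ)ᗮ ↔
      mulLM (conjFun φ) f ∈ (Kmod θ)ᗮ ∧ mulLM (conjFun ψ) f ∈ (Kmod θ)ᗮ := by
  rw [multiband, ← Submodule.inf_orthogonal, Submodule.mem_inf,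
    mem_map_mulLM_orthogonal_iff hφ, mem_map_mulLM_orthogonal_iff hψ]

lemma mem_multiband_iff {h : L2} :
    h ∈ multiband θ φ ψ ↔ ∃ f₁ ∈ Kmod θ, ∃ f₂ ∈ Kmod θ, h = mulLM φ f₁ + mulLM ψ f₂ := by
  simp only [multiband, Submodule.mem_sup, Submodule.mem_map, eq_comm (a := h)]
  aesop

lemma norm_sq_mulLM_add_mulLM (hφ : MemLp φ ⊤ μ0) (hψ : MemLp ψ ⊤ μ0)
    (hφu : ∀ᵐ x ∂μ0, ‖φ x‖ = 1) (hψu : ∀ᵐ x ∂μ0, ‖ψ x‖ = 1)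
    (hperp : (Kmod θ).map (mulLM φ) ≤ ((Kmod θ).map (mulLM ψ))ᗮ)
    {f₁ f₂ : L2} (h₁ : f₁ ∈ Kmod θ) (h₂ : f₂ ∈ Kmod θ) :
    ‖mulLM φ f₁ + mulLM ψ f₂‖ ^ 2 = ‖f₁‖ ^ 2 + ‖f₂‖ ^ 2 := by
  have horth := Submodule.inner_left_of_mem_orthogonal (Submodule.mem_map_of_mem h₂)
    (hperp (Submodule.mem_map_of_mem h₁))
  rw [← norm_mulLM hφ hφu f₁, ← norm_mulLM hψ hψu f₂]
  simpa only [sq] using norm_add_sq_eq_norm_sq_add_norm_sq_of_inner_eq_zero _ _ horth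

lemma mulLM_conjFun_mulLM_add (hg : MemLp g ⊤ μ0) (hφ : MemLp φ ⊤ μ0) (hψ : MemLp ψ ⊤ μ0)
    (hφu : ∀ᵐ x ∂μ0, ‖φ x‖ = 1) (f₁ f₂ : L2) :
    mulLM (conjFun φ) (mulLM g (mulLM φ f₁ + mulLM ψ f₂))
      = mulLM g f₁ + mulLM (fun x => g x * conjFun φ x * ψ x) f₂ := by
  apply Lp.ext
  filter_upwards [coeFn_mulLM (memLp_conj hφ) (mulLM g (mulLM φ f₁ + mulLM ψ f₂)),
    coeFn_mulLM hg (mulLM φ f₁ + mulLM ψ f₂), Lp.coeFn_add (mulLM φ f₁) (mulLM ψ f₂),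
    coeFn_mulLM hφ f₁, coeFn_mulLM hψ f₂,
    Lp.coeFn_add (mulLM g f₁) (mulLM (fun x => g x * conjFun φ x * ψ x) f₂),
    coeFn_mulLM hg f₁, coeFn_mulLM (a := fun x => g x * conjFun φ x * ψ x)
      (hψ.mul (r := ⊤) ((memLp_conj hφ).mul (r := ⊤) hg)) f₂,
    hφu] with x h1 h2 h3 h4 h5 h6 h7 h8 h9
  rw [h1, h2, h3, Pi.add_apply, h4, h5, h6, Pi.add_apply, h7, h8]
  have hφx : conj (φ x) * φ x = 1 := by rw [RCLike.conj_mul, h9]; norm_num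
  simp only [conjFun]
  linear_combination (g x * f₁ x) * hφx

lemma rowLM_Gmb_zero (hg : MemLp g ⊤ μ0) (hφ : MemLp φ ⊤ μ0) (hψ : MemLp ψ ⊤ μ0)
    (hφu : ∀ᵐ x ∂μ0, ‖φ x‖ = 1) (f₁ f₂ : L2) :
    rowLM (Gmb g φ ψ) 0 (WithLp.toLp 2 ![f₁, f₂])
      = mulLM (conjFun φ) (mulLM g (mulLM φ f₁ + mulLM ψ f₂)) := by
  rw [mulLM_conjFun_mulLM_add hg hφ hψ hφu, rowLM_apply, Fin.sum_univ_two]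
  rfl

lemma rowLM_Gmb_one (hg : MemLp g ⊤ μ0) (hφ : MemLp φ ⊤ μ0) (hψ : MemLp ψ ⊤ μ0)
    (hψu : ∀ᵐ x ∂μ0, ‖ψ x‖ = 1) (f₁ f₂ : L2) :
    rowLM (Gmb g φ ψ) 1 (WithLp.toLp 2 ![f₁, f₂])
      = mulLM (conjFun ψ) (mulLM g (mulLM φ f₁ + mulLM ψ f₂)) := by
  rw [add_comm, mulLM_conjFun_mulLM_add hg hψ hφ hψu, rowLM_apply, Fin.sum_univ_two, add_comm]
  rfl

lemma mulLM_add_mem_kerAM_iff (hg : MemLp g ⊤ μ0) (hφ : MemLp φ ⊤ μ0) (hψ : MemLp ψ ⊤ μ0)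
    (hφu : ∀ᵐ x ∂μ0, ‖φ x‖ = 1) (hψu : ∀ᵐ x ∂μ0, ‖ψ x‖ = 1)
    {f₁ f₂ : L2} (h₁ : f₁ ∈ Kmod θ) (h₂ : f₂ ∈ Kmod θ) :
    mulLM φ f₁ + mulLM ψ f₂ ∈ kerAM θ φ ψ g ↔
      (WithLp.toLp 2 ![f₁, f₂] : Vec 2) ∈ kerAv θ (Gmb g φ ψ) := by
  have hM : mulLM φ f₁ + mulLM ψ f₂ ∈ multiband θ φ ψ := mem_multiband_iff.2 ⟨f₁, h₁, f₂, h₂, rfl⟩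
  change _ ↔ _ ∈ kerAvec θ (Gmb g φ ψ)
  rw [kerAM, Submodule.mem_inf, Submodule.mem_comap, mem_multiband_orthogonal_iff hφ hψ,
    mem_kerAvec_iff, Fin.forall_fin_two, Fin.forall_fin_two, rowLM_Gmb_zero hg hφ hψ hφu,
    rowLM_Gmb_one hg hφ hψ hψu]
  simp [hM, h₁, h₂]

end Multiband

theorem multiband_kernel_unitarily_equivalent_general
    (θ g φ ψ : Tc → ℂ) (hg : MemLp g ⊤ μ0)
    (hφ : MemLp φ ⊤ μ0) (hψ : MemLp ψ ⊤ μ0)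
    (hφu : ∀ᵐ x ∂μ0, ‖φ x‖ = 1) (hψu : ∀ᵐ x ∂μ0, ‖ψ x‖ = 1)
    (hperp : (Kmod θ).map (mulLM φ) ≤ ((Kmod θ).map (mulLM ψ))ᗮ) :
    -- `U` is unitary: it is isometric (hence injective and well defined) …
    (∀ f₁ ∈ Kmod θ, ∀ f₂ ∈ Kmod θ,
        ‖mulLM φ f₁ + mulLM ψ f₂‖ ^ 2 = ‖f₁‖ ^ 2 + ‖f₂‖ ^ 2) ∧
    -- … and every element of `M` has the form `φf₁ + ψf₂` (so `U` is onto `K_θ(𝔻, ℂ²)`)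
    (∀ h ∈ multiband θ φ ψ, ∃ f₁ ∈ Kmod θ, ∃ f₂ ∈ Kmod θ,
        h = mulLM φ f₁ + mulLM ψ f₂) ∧
    -- `ker A_g^M = U* (ker A_G^θ)`
    (∀ f₁ ∈ Kmod θ, ∀ f₂ ∈ Kmod θ,
        (mulLM φ f₁ + mulLM ψ f₂ ∈ kerAM θ φ ψ g ↔
          (WithLp.toLp 2 ![f₁, f₂] : Vec 2) ∈ kerAv θ (Gmb g φ ψ))) ∧
    -- `U(ker A_g^M) = ker A_G^θ` is nearly `S*`-invariant with defect `2`
    (∃ E : Submodule ℂ (Vec 2), Module.finrank ℂ E ≤ 2 ∧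
        E ≤ (kerAv θ (Gmb g φ ψ))ᗮ ∧
        ∀ F ∈ kerAv θ (Gmb g φ ψ), ev0 F = 0 →
          SstarV F ∈ kerAv θ (Gmb g φ ψ) ⊔ E) := by
  obtain ⟨E, -, hE⟩ := isNearlySstarInvariant_kerAvec θ (Gmb g φ ψ)
  exact ⟨fun f₁ h₁ f₂ h₂ => norm_sq_mulLM_add_mulLM hφ hψ hφu hψu hperp h₁ h₂,
    fun h hh => mem_multiband_iff.1 hh,
    fun f₁ h₁ f₂ h₂ => mulLM_add_mem_kerAM_iff hg hφ hψ hφu hψu h₁ h₂, E, hE⟩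

/-- **(Section 6).**  For unimodular `φ, ψ ∈ L^∞` with `φK_θ ⊥ ψK_θ`, the map
`U : φK_θ ⊕ ψK_θ → K_θ(𝔻, ℂ²)`, `φf₁ + ψf₂ ↦ (f₁, f₂)`, is unitary and identifies
`ker A_g^M` with `ker A_G^θ`, where `G = [[A_g^θ, A_{gφ̄ψ}^θ], [A_{gψ̄φ}^θ, A_g^θ]]`-style
matrix symbol `Gmb g φ ψ`; in particular `U(ker A_g^M)` is nearly `S*`-invariant with
defect `2`. -/
theorem multiband_kernel_unitarily_equivalent
    (θ g φ ψ : Tc → ℂ) (hθ : IsInner θ) (hg : MemLp g ⊤ μ0)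
    (hφ : MemLp φ ⊤ μ0) (hψ : MemLp ψ ⊤ μ0)
    (hφu : ∀ᵐ x ∂μ0, ‖φ x‖ = 1) (hψu : ∀ᵐ x ∂μ0, ‖ψ x‖ = 1)
    (hperp : (Kmod θ).map (mulLM φ) ≤ ((Kmod θ).map (mulLM ψ))ᗮ) :
    -- `U` is unitary: it is isometric (hence injective and well defined) …
    (∀ f₁ ∈ Kmod θ, ∀ f₂ ∈ Kmod θ,
        ‖mulLM φ f₁ + mulLM ψ f₂‖ ^ 2 = ‖f₁‖ ^ 2 + ‖f₂‖ ^ 2) ∧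
    -- … and every element of `M` has the form `φf₁ + ψf₂` (so `U` is onto `K_θ(𝔻, ℂ²)`)
    (∀ h ∈ multiband θ φ ψ, ∃ f₁ ∈ Kmod θ, ∃ f₂ ∈ Kmod θ,
        h = mulLM φ f₁ + mulLM ψ f₂) ∧
    -- `ker A_g^M = U* (ker A_G^θ)`
    (∀ f₁ ∈ Kmod θ, ∀ f₂ ∈ Kmod θ,
        (mulLM φ f₁ + mulLM ψ f₂ ∈ kerAM θ φ ψ g ↔
          (WithLp.toLp 2 ![f₁, f₂] : Vec 2) ∈ kerAv θ (Gmb g φ ψ))) ∧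
    -- `U(ker A_g^M) = ker A_G^θ` is nearly `S*`-invariant with defect `2`
    (∃ E : Submodule ℂ (Vec 2), Module.finrank ℂ E ≤ 2 ∧
        E ≤ (kerAv θ (Gmb g φ ψ))ᗮ ∧
        ∀ F ∈ kerAv θ (Gmb g φ ψ), ev0 F = 0 →
          SstarV F ∈ kerAv θ (Gmb g φ ψ) ⊔ E) :=
  multiband_kernel_unitarily_equivalent_general θ g φ ψ hg hφ hψ hφu hψu hperp

end Paper
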